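/- Let R be a term rewrite system such that |MSDC(r)| = 1 for every rule ℓ → r ∈ R. Then for every rule ℓ → r ∈ R, DTpar(ℓ → r) = { DT(ℓ → r) }, where DT(ℓ → r) is formed using any total order on positions that extends the strict prefix order on PosD(r); consequently DTpar(R) = DT(R). -/

import Mathlib

namespace ParallelComplexity

/-! ## First-order terms -/

inductive Term (σ : Type) (V : Type) : Type where
  | var : V → Term σ V
  | fn : σ → List (Term σ V) → Term σ V

variable {σ V : Type}

mutual
  /-- Application of a substitution to a term. -/
  def Term.subst (θ : V → Term σ V) : Term σ V → Term σ V
    | Term.var x => θ x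
    | Term.fn f ts => Term.fn f (Term.substList θ ts)
  def Term.substList (θ : V → Term σ V) : List (Term σ V) → List (Term σ V)
    | [] => []
    | t :: ts => Term.subst θ t :: Term.substList θ ts
end

mutual
  /-- The size |t| of a term. -/
  def Term.size : Term σ V → ℕ
    | Term.var _ => 1
    | Term.fn _ ts => 1 + Term.sizeList ts
  def Term.sizeList : List (Term σ V) → ℕ
    | [] => 0
    | t :: ts => Term.size t + Term.sizeList ts
end

/-- Subterm `t|π` at a position (positions are lists of argument indices);
`none` if the position is not a position of `t`. -/
def Term.subtermAt : Term σ V → List ℕ → Option (Term σ V)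
  | t, [] => some t
  | Term.var _, _ :: _ => none
  | Term.fn _ ts, i :: π =>
    match ts[i]? with
    | none => none
    | some u => Term.subtermAt u π

/-- `t[s]π`: replacement of the subterm at position `π` by `s`. -/
def Term.replaceAt : Term σ V → List ℕ → Term σ V → Option (Term σ V)
  | _, [], s => some s
  | Term.var _, _ :: _, _ => none
  | Term.fn f ts, i :: π, s =>
    match ts[i]? with
    | none => none
    | some u =>
      match Term.replaceAt u π s with
      | none => none
      | some u' => some (Term.fn f (ts.set i u'))

def Term.isVar (t : Term σ V) : Prop := ∃ x, t = Term.var x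

/-- `x` occurs as a variable in the term. -/
inductive Term.VarIn (x : V) : Term σ V → Prop
  | var : Term.VarIn x (Term.var x)
  | fn {f : σ} {ts : List (Term σ V)} {t : Term σ V} :
      t ∈ ts → Term.VarIn x t → Term.VarIn x (Term.fn f ts)

/-! ## Term rewrite systems -/

structure Rule (σ V : Type) where
  lhs : Term σ V
  rhs : Term σ V

/-- A well-formed TRS: a finite set of rules `ℓ → r` with `ℓ ∉ V` and
`Var(r) ⊆ Var(ℓ)`. -/
def IsWfTRS (R : Set (Rule σ V)) : Prop :=
  R.Finite ∧ (∀ r ∈ R, ¬ r.lhs.isVar) ∧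
    ∀ r ∈ R, ∀ x : V, Term.VarIn x r.rhs → Term.VarIn x r.lhs

def IsRedex (R : Set (Rule σ V)) (t : Term σ V) : Prop :=
  ∃ r ∈ R, ∃ θ : V → Term σ V, t = Term.subst θ r.lhs

/-- An innermost redex: a redex none of whose proper subterms is a redex. -/
def IsInnermostRedex (R : Set (Rule σ V)) (t : Term σ V) : Prop :=
  IsRedex R t ∧
    ∀ π : List ℕ, π ≠ [] → ∀ u, t.subtermAt π = some u → ¬ IsRedex R u

/-- One rewrite step at position `π`. -/
def RewriteAt (R : Set (Rule σ V)) (π : List ℕ) (s t : Term σ V) : Prop :=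
  ∃ r ∈ R, ∃ θ : V → Term σ V,
    s.subtermAt π = some (Term.subst θ r.lhs) ∧
    s.replaceAt π (Term.subst θ r.rhs) = some t

/-- The rewrite relation `s →_R t`. -/
def Rewrite (R : Set (Rule σ V)) (s t : Term σ V) : Prop := ∃ π, RewriteAt R π s t

/-- The innermost rewrite relation `s →i t`. -/
def InnermostRewrite (R : Set (Rule σ V)) (s t : Term σ V) : Prop :=
  ∃ π, ∃ r ∈ R, ∃ θ : V → Term σ V,
    s.subtermAt π = some (Term.subst θ r.lhs) ∧
    IsInnermostRedex R (Term.subst θ r.lhs) ∧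
    s.replaceAt π (Term.subst θ r.rhs) = some t

def NormalForm (R : Set (Rule σ V)) (t : Term σ V) : Prop := ¬ ∃ u, Rewrite R t u

/-- Parallel-innermost rewriting `s ⇉ t`: `s →i⁺ t` and either
(a) `s` is an innermost redex and `s →i t`, or (b) `s = f(s₁,…,sₙ)`,
`t = f(t₁,…,tₙ)` and each `sₖ ⇉ tₖ` or `sₖ = tₖ` is a normal form. -/
inductive ParInnermost (R : Set (Rule σ V)) : Term σ V → Term σ V → Prop
  | redex {s t : Term σ V} :
      Relation.TransGen (InnermostRewrite R) s t →
      IsInnermostRedex R s → InnermostRewrite R s t → ParInnermost R s t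
  | congr (f : σ) (ss ts : List (Term σ V)) :
      Relation.TransGen (InnermostRewrite R) (Term.fn f ss) (Term.fn f ts) →
      ss.length = ts.length →
      -- each `sₖ ⇉ tₖ`, or `sₖ = tₖ` is a normal form (stated as the
      -- classically equivalent implication to satisfy the kernel's
      -- restrictions on nested inductive occurrences)
      (∀ p ∈ ss.zip ts, ¬ (p.1 = p.2 ∧ NormalForm R p.1) → ParInnermost R p.1 p.2) →
      ParInnermost R (Term.fn f ss) (Term.fn f ts)

/-! ## Abstract properties of relations -/

def Confluent {α : Type} (r : α → α → Prop) : Prop :=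
  ∀ s t u, Relation.ReflTransGen r s t → Relation.ReflTransGen r s u →
    ∃ v, Relation.ReflTransGen r t v ∧ Relation.ReflTransGen r u v

def Deterministic {α : Type} (r : α → α → Prop) : Prop :=
  ∀ s t u, r s t → r s u → t = u

def UniformlyConfluent {α : Type} (r : α → α → Prop) : Prop :=
  ∀ s t u, r s t → r s u → t = u ∨ ∃ v, r t v ∧ r u v

/-! ## Derivation height and runtime complexity -/

/-- `e`-th iterate of a relation. -/
def iterRel {α : Type} (r : α → α → Prop) : ℕ → α → α → Prop
  | 0 => fun a b => a = b
  | n + 1 => fun a c => ∃ b, r a b ∧ iterRel r n b c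

/-- Derivation height `Dh(t, →) = sup { e | ∃ t'. t →^e t' } ∈ ℕ ∪ {ω}`. -/
noncomputable def Dh {α : Type} (r : α → α → Prop) (t : α) : ℕ∞ :=
  sSup { e : ℕ∞ | ∃ n : ℕ, e = (n : ℕ∞) ∧ ∃ t', iterRel r n t t' }

/-- Defined symbols: root symbols of left-hand sides. -/
def Defined (R : Set (Rule σ V)) (f : σ) : Prop :=
  ∃ r ∈ R, ∃ ts : List (Term σ V), r.lhs = Term.fn f ts

def HasDefinedRoot (R : Set (Rule σ V)) (t : Term σ V) : Prop :=
  ∃ f ts, t = Term.fn f ts ∧ Defined R f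

/-- Constructor terms: terms over constructor symbols and variables. -/
inductive ConsTerm (R : Set (Rule σ V)) : Term σ V → Prop
  | var (x : V) : ConsTerm R (Term.var x)
  | fn (f : σ) (ts : List (Term σ V)) :
      ¬ Defined R f → (∀ t ∈ ts, ConsTerm R t) → ConsTerm R (Term.fn f ts)

/-- Basic terms: a defined symbol applied to constructor terms. -/
def BasicTerm (R : Set (Rule σ V)) (t : Term σ V) : Prop :=
  ∃ f ts, t = Term.fn f ts ∧ Defined R f ∧ ∀ u ∈ ts, ConsTerm R u

/-- Innermost runtime complexity. -/
noncomputable def irc (R : Set (Rule σ V)) (n : ℕ) : ℕ∞ :=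
  sSup { d : ℕ∞ | ∃ t, BasicTerm R t ∧ t.size ≤ n ∧ d = Dh (InnermostRewrite R) t }

/-- Parallel-innermost runtime complexity. -/
noncomputable def pirc (R : Set (Rule σ V)) (n : ℕ) : ℕ∞ :=
  sSup { d : ℕ∞ | ∃ t, BasicTerm R t ∧ t.size ≤ n ∧ d = Dh (ParInnermost R) t }

/-! ## Critical pairs -/

def RuleVars (r : Rule σ V) : Set V :=
  { x | Term.VarIn x r.lhs ∨ Term.VarIn x r.rhs }

/-- `r₂` is a variant of `r₁` (each is a substitution instance of the other). -/
def IsVariantOf (r₁ r₂ : Rule σ V) : Prop :=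
  ∃ θ₁ θ₂ : V → Term σ V,
    r₂.lhs = Term.subst θ₁ r₁.lhs ∧ r₂.rhs = Term.subst θ₁ r₁.rhs ∧
    r₁.lhs = Term.subst θ₂ r₂.lhs ∧ r₁.rhs = Term.subst θ₂ r₂.rhs

def Unifies (θ : V → Term σ V) (s t : Term σ V) : Prop :=
  Term.subst θ s = Term.subst θ t

def IsMGU (μ : V → Term σ V) (s t : Term σ V) : Prop :=
  Unifies μ s t ∧
    ∀ δ : V → Term σ V, Unifies δ s t →
      ∃ δ' : V → Term σ V, ∀ x : V, Term.subst δ' (μ x) = δ x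

/-- Critical pairs `⟨uσ[rσ]π, vσ⟩` of a TRS, from variable-renamed copies
`ℓ → r` and `u → v` of rules of `R` overlapping at a non-variable position
`π` of `u` (not a root overlap of variants of the same rule). -/
def CriticalPair (R : Set (Rule σ V)) (cp : Term σ V × Term σ V) : Prop :=
  ∃ r₁ r₂ r₁' r₂' : Rule σ V, r₁' ∈ R ∧ r₂' ∈ R ∧
    IsVariantOf r₁' r₁ ∧ IsVariantOf r₂' r₂ ∧
    (∀ x : V, x ∈ RuleVars r₁ → x ∉ RuleVars r₂) ∧
    ∃ (π : List ℕ) (u' : Term σ V),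
      r₂.lhs.subtermAt π = some u' ∧ ¬ u'.isVar ∧
      (π = [] → ¬ IsVariantOf r₁ r₂) ∧
      ∃ μ : V → Term σ V, IsMGU μ r₁.lhs u' ∧
        ∃ w : Term σ V,
          (Term.subst μ r₂.lhs).replaceAt π (Term.subst μ r₁.rhs) = some w ∧
          cp = (w, Term.subst μ r₂.rhs)

/-- `R` is non-overlapping iff it has no critical pairs. -/
def NonOverlapping (R : Set (Rule σ V)) : Prop := ∀ cp, ¬ CriticalPair R cp

/-- An innermost critical overlay: a critical pair at the root position whose
critical peak consists of two innermost rewrite steps. -/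
def InnermostCriticalOverlay (R : Set (Rule σ V)) (cp : Term σ V × Term σ V) : Prop :=
  ∃ r₁ r₂ r₁' r₂' : Rule σ V, r₁' ∈ R ∧ r₂' ∈ R ∧
    IsVariantOf r₁' r₁ ∧ IsVariantOf r₂' r₂ ∧
    (∀ x : V, x ∈ RuleVars r₁ → x ∉ RuleVars r₂) ∧
    ¬ IsVariantOf r₁ r₂ ∧
    ∃ μ : V → Term σ V, IsMGU μ r₁.lhs r₂.lhs ∧
      IsInnermostRedex R (Term.subst μ r₂.lhs) ∧
      cp = (Term.subst μ r₁.rhs, Term.subst μ r₂.rhs)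

/-! ## Positions with defined symbols and structural dependency chains -/

/-- Strict prefix order on positions: `PosGT τ π` iff `τ > π`,
i.e. `∃ π' ≠ ε, π π' = τ`. -/
def PosGT (τ π : List ℕ) : Prop := ∃ π' : List ℕ, π' ≠ [] ∧ π ++ π' = τ

/-- `PosD(t)`: positions of `t` with defined root symbol. -/
def PosD (R : Set (Rule σ V)) (t : Term σ V) : Set (List ℕ) :=
  { π | ∃ u, t.subtermAt π = some u ∧ HasDefinedRoot R u }

/-- Structural dependency chain `⟨π₁,…,πₖ⟩` for `t`: positions in `PosD(t)`
with `π₁ > … > πₖ`. -/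
def SDChain (R : Set (Rule σ V)) (t : Term σ V) (c : List (List ℕ)) : Prop :=
  (∀ π ∈ c, π ∈ PosD R t) ∧ c.Chain' PosGT

/-- Maximal structural dependency chains: `MSDC R t c` iff `c` is a maximal
structural dependency chain for `t`. -/
def MSDC (R : Set (Rule σ V)) (t : Term σ V) (c : List (List ℕ)) : Prop :=
  SDChain R t c ∧
    ((c = [] ∧ PosD R t = ∅) ∨
      ∃ (π₁ : List ℕ) (rest : List (List ℕ)), c = π₁ :: rest ∧
        ∀ π ∈ PosD R t, ¬ PosGT π π₁ ∧ (PosGT π₁ π → π ∈ rest))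

/-! ## Sharp terms, dependency tuples -/

/-- Extended signature: base symbols, sharp symbols `f#`, compound symbols `Com_n`. -/
inductive SharpSym (σ : Type) : Type where
  | base : σ → SharpSym σ
  | sharp : σ → SharpSym σ
  | com : ℕ → SharpSym σ

mutual
  def Term.embed : Term σ V → Term (SharpSym σ) V
    | Term.var x => Term.var x
    | Term.fn f ts => Term.fn (SharpSym.base f) (Term.embedList ts)
  def Term.embedList : List (Term σ V) → List (Term (SharpSym σ) V)
    | [] => []
    | t :: ts => Term.embed t :: Term.embedList ts
end

open Classical in
/-- `t#`: mark the root of `t` with its sharp symbol (if defined). -/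
noncomputable def Term.sharp (R : Set (Rule σ V)) : Term σ V → Term (SharpSym σ) V
  | Term.var x => Term.var x
  | Term.fn f ts =>
    if Defined R f then Term.fn (SharpSym.sharp f) (Term.embedList ts)
    else Term.fn (SharpSym.base f) (Term.embedList ts)

open Classical in
/-- Sharping on terms over the extended signature: for `t = f(…)` with `f` a
defined (base) symbol of `R`, mark the root; otherwise `t# = t`. -/
noncomputable def sharpC (R : Set (Rule σ V)) : Term (SharpSym σ) V → Term (SharpSym σ) V
  | Term.fn (SharpSym.base f) ts =>
    if Defined R f then Term.fn (SharpSym.sharp f) ts else Term.fn (SharpSym.base f) ts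
  | t => t

def liftRule (r : Rule σ V) : Rule (SharpSym σ) V :=
  { lhs := r.lhs.embed, rhs := r.rhs.embed }

def liftRules (R : Set (Rule σ V)) : Set (Rule (SharpSym σ) V) := liftRule '' R

/-- The dependency tuple `ℓ# → Com_k(u₁#,…,uₖ#)` built from subterms `u₁,…,uₖ`
of the right-hand side. -/
noncomputable def mkDT (R : Set (Rule σ V)) (ρ : Rule σ V) (us : List (Term σ V)) :
    Rule (SharpSym σ) V :=
  { lhs := Term.sharp R ρ.lhs,
    rhs := Term.fn (SharpSym.com us.length) (us.map (Term.sharp R)) }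

/-- `DTpar(ℓ → r)`: one dependency tuple per maximal structural dependency chain. -/
def DTparRule (R : Set (Rule σ V)) (ρ : Rule σ V) : Set (Rule (SharpSym σ) V) :=
  { d | ∃ (c : List (List ℕ)) (us : List (Term σ V)),
      MSDC R ρ.rhs c ∧
      List.Forall₂ (fun π u => ρ.rhs.subtermAt π = some u) c us ∧
      d = mkDT R ρ us }

/-- `DTpar(R)`. -/
def DTparSet (R : Set (Rule σ V)) : Set (Rule (SharpSym σ) V) :=
  ⋃ ρ ∈ R, DTparRule R ρ

/-! ## Chain trees and Cplx -/

/-- A (possibly infinite, finitely branching) tree whose nodes (addressed by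
paths) are labelled with a dependency tuple and a substitution; the child at
direction `i` corresponds to argument `i` of the `Com` symbol. -/
structure ChainTree (σ V : Type) where
  label : List ℕ → Option (Rule (SharpSym σ) V × (V → Term (SharpSym σ) V))

/-- `T` is a `(D,R)`-chain tree for the sharp term `t`. -/
def IsChainTree (D R : Set (Rule (SharpSym σ) V)) (T : ChainTree σ V)
    (t : Term (SharpSym σ) V) : Prop :=
  (∃ r ν, T.label [] = some (r, ν) ∧ Term.subst ν r.lhs = t) ∧
  (∀ (p : List ℕ) (i : ℕ), T.label (p ++ [i]) ≠ none → T.label p ≠ none) ∧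
  (∀ (p : List ℕ) (r : Rule (SharpSym σ) V) (ν : V → Term (SharpSym σ) V),
    T.label p = some (r, ν) →
      r ∈ D ∧ NormalForm R (Term.subst ν r.lhs) ∧
      ∀ (i : ℕ) (r' : Rule (SharpSym σ) V) (δ : V → Term (SharpSym σ) V),
        T.label (p ++ [i]) = some (r', δ) →
          ∃ (m : ℕ) (vs : List (Term (SharpSym σ) V)),
            r.rhs = Term.fn (SharpSym.com m) vs ∧
            ∃ v, vs[i]? = some v ∧
              Relation.ReflTransGen (InnermostRewrite R)
                (Term.subst ν v) (Term.subst δ r'.lhs))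

/-- `|T|_S`: the number of nodes of `T` labelled with a DT from `S`. -/
noncomputable def treeCount (T : ChainTree σ V) (S : Set (Rule (SharpSym σ) V)) : ℕ∞ :=
  Set.encard { p : List ℕ | ∃ r ν, T.label p = some (r, ν) ∧ r ∈ S }

/-- `Cplx⟨D,S,R⟩(t)`: the supremum of `|T|_S` over all `(D,R)`-chain trees `T`
for `t` (`0` if there is no chain tree). -/
noncomputable def Cplx (D S R : Set (Rule (SharpSym σ) V))
    (t : Term (SharpSym σ) V) : ℕ∞ :=
  sSup { c : ℕ∞ | ∃ T : ChainTree σ V, IsChainTree D R T t ∧ c = treeCount T S }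

/-- `irc⟨D,S,R⟩(n)`: runtime complexity of a DT problem. -/
noncomputable def ircDTP (D S : Set (Rule (SharpSym σ) V)) (R : Set (Rule σ V))
    (n : ℕ) : ℕ∞ :=
  sSup { c : ℕ∞ | ∃ t : Term σ V, BasicTerm R t ∧ t.size ≤ n ∧
    c = Cplx D S (liftRules R) (Term.sharp R t) }

/-! ## Relative rewriting -/

/-- An innermost rewrite step using a rule from `X`, with innermost-ness
relative to the whole system `W`. -/
def InnermostRewriteSub (W X : Set (Rule σ V)) (s t : Term σ V) : Prop :=
  ∃ π, ∃ r ∈ X, ∃ θ : V → Term σ V,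
    s.subtermAt π = some (Term.subst θ r.lhs) ∧
    IsInnermostRedex W (Term.subst θ r.lhs) ∧
    s.replaceAt π (Term.subst θ r.rhs) = some t

/-- Innermost relative rewriting `→i_{A/B}`:
`s →B* s' →A s'' →B* t`, all steps innermost wrt `A ∪ B`. -/
def RelInnermost (A B : Set (Rule σ V)) (s t : Term σ V) : Prop :=
  ∃ s' s'' : Term σ V,
    Relation.ReflTransGen (InnermostRewriteSub (A ∪ B) B) s s' ∧
    InnermostRewriteSub (A ∪ B) A s' s'' ∧
    Relation.ReflTransGen (InnermostRewriteSub (A ∪ B) B) s'' t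

/-- Innermost runtime complexity of a relative TRS `A/B`. -/
noncomputable def ircRel (A B : Set (Rule σ V)) (n : ℕ) : ℕ∞ :=
  sSup { d : ℕ∞ | ∃ t : Term σ V, BasicTerm (A ∪ B) t ∧ t.size ≤ n ∧
    d = Dh (RelInnermost A B) t }

/-! ## Dependency tuples (abstract DT problems) -/

inductive IsBaseTerm : Term (SharpSym σ) V → Prop
  | var (x : V) : IsBaseTerm (Term.var x)
  | fn (f : σ) (ts : List (Term (SharpSym σ) V)) :
      (∀ t ∈ ts, IsBaseTerm t) → IsBaseTerm (Term.fn (SharpSym.base f) ts)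

def IsSharpTerm (t : Term (SharpSym σ) V) : Prop :=
  ∃ (f : σ) (args : List (Term (SharpSym σ) V)),
    t = Term.fn (SharpSym.sharp f) args ∧ ∀ a ∈ args, IsBaseTerm a

/-- A dependency tuple: a rule `s# → Com_n(t₁#,…,tₙ#)`. -/
def IsDT (r : Rule (SharpSym σ) V) : Prop :=
  IsSharpTerm r.lhs ∧
    ∃ (n : ℕ) (ts : List (Term (SharpSym σ) V)),
      r.rhs = Term.fn (SharpSym.com n) ts ∧ ts.length = n ∧ ∀ t ∈ ts, IsSharpTerm t

/-! ## Argument normal forms -/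

/-- Argument normal form: a variable, or a term all of whose direct arguments
are normal forms. -/
def ArgNF (R : Set (Rule σ V)) (t : Term σ V) : Prop :=
  (∃ x, t = Term.var x) ∨ ∃ f ts, t = Term.fn f ts ∧ ∀ u ∈ ts, NormalForm R u

/-- A parallel-innermost step all of whose rewrites are at positions strictly
below the root. -/
def ParInnermostBelow (R : Set (Rule σ V)) (s t : Term σ V) : Prop :=
  ParInnermost R s t ∧ ¬ IsInnermostRedex R s

/-- `b` is a maximal parallel argument normal form of `u`. -/
noncomputable def MaxANF (R : Set (Rule σ V)) (u b : Term σ V) : Prop :=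
  ArgNF R b ∧ Relation.ReflTransGen (ParInnermostBelow R) u b ∧
    ∀ u', ArgNF R u' → Relation.ReflTransGen (ParInnermostBelow R) u u' →
      Dh (ParInnermost R) u' ≤ Dh (ParInnermost R) b

/-! ## Many-sorted type assignments -/

/-- Well-typedness of a term wrt a sort set `St`, a type assignment `arty`
(argument sorts and result sort for each symbol) and variable typing `vty`. -/
inductive WellTyped {τ : Type} (St : Type) (arty : τ → List St × St) (vty : V → St) :
    Term τ V → St → Prop
  | var (x : V) : WellTyped St arty vty (Term.var x) (vty x)
  | fn (f : τ) (ts : List (Term τ V)) :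
      ts.length = (arty f).1.length →
      (∀ p ∈ ts.zip (arty f).1, WellTyped St arty vty p.1 p.2) →
      WellTyped St arty vty (Term.fn f ts) (arty f).2

/-- A strict total order on positions extending the strict prefix order. -/
def TotalExtOfPrefix (gt' : List ℕ → List ℕ → Prop) : Prop :=
  (∀ π τ, PosGT π τ → gt' π τ) ∧
  (∀ π τ ρ, gt' π τ → gt' τ ρ → gt' π ρ) ∧
  (∀ π τ, gt' π τ → ¬ gt' τ π) ∧
  (∀ π τ, π ≠ τ → gt' π τ ∨ gt' τ π)

/-!
Every position of `PosD(r)` extends to a deepest one `π₁`, and `π₁` followed by all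
`PosD`-prefixes of `π₁` is a maximal structural dependency chain through it. Hence a unique
maximal chain contains all of `PosD(r)`. Being ordered by the prefix order, it is then the
enumeration of `PosD(r)` that decreases for any total order extending the prefix order, and
the tuple it yields is `DT(ℓ → r)`.
-/

theorem posGT_iff_prefix_ne {τ π : List ℕ} : PosGT τ π ↔ π <+: τ ∧ π ≠ τ := by
  constructor
  · rintro ⟨p, hp, rfl⟩
    exact ⟨List.prefix_append π p, by simpa using hp.symm⟩
  · rintro ⟨⟨p, rfl⟩, hne⟩
    exact ⟨p, by rintro rfl; simp at hne, rfl⟩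

theorem PosGT.length_lt {τ π : List ℕ} (h : PosGT τ π) : π.length < τ.length := by
  obtain ⟨p, hp, rfl⟩ := h
  simp [List.length_pos_iff.2 hp]

theorem PosGT.trans {a b c : List ℕ} (hab : PosGT a b) (hbc : PosGT b c) : PosGT a c := by
  obtain ⟨p, hp, rfl⟩ := hab
  obtain ⟨q, -, rfl⟩ := hbc
  exact ⟨q ++ p, by simp [hp], (List.append_assoc c q p).symm⟩

instance : IsTrans (List ℕ) PosGT := ⟨fun _ _ _ => PosGT.trans⟩

theorem pairwise_inits_posGT (l : List ℕ) : l.inits.Pairwise (fun a b => PosGT b a) := by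
  rw [List.pairwise_iff_getElem]
  intro i j hi hj hij
  have hjl : j ≤ l.length := by simpa [Nat.lt_succ_iff] using hj
  simp only [List.getElem_inits]
  refine posGT_iff_prefix_ne.2 ⟨List.take_prefix_take_left ?_, fun h => ?_⟩
  · omega
  · have := congrArg List.length h
    simp only [List.length_take] at this
    omega

theorem Term.size_pos : ∀ t : Term σ V, 0 < t.size
  | Term.var _ => by simp [Term.size]
  | Term.fn _ _ => by simp [Term.size]

theorem Term.size_le_sizeList {u : Term σ V} :
    ∀ {ts : List (Term σ V)}, u ∈ ts → u.size ≤ Term.sizeList ts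
  | t :: ts, h => by
    rcases List.mem_cons.1 h with rfl | h
    · simp [Term.sizeList]
    · have := Term.size_le_sizeList h
      simp only [Term.sizeList]
      omega

theorem Term.length_lt_size_of_subtermAt :
    ∀ {π : List ℕ} {t u : Term σ V}, t.subtermAt π = some u → π.length < t.size
  | [], t, _, _ => Term.size_pos t
  | i :: π, Term.fn f ts, u, h => by
    cases hi : ts[i]? with
    | none => simp [Term.subtermAt, hi] at h
    | some u' =>
      simp only [Term.subtermAt, hi] at h
      have hπ := Term.length_lt_size_of_subtermAt h
      have hu' := Term.size_le_sizeList (List.mem_of_getElem? hi)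
      simp only [List.length_cons, Term.size]
      omega

section MSDC

variable {R : Set (Rule σ V)} {t : Term σ V}

theorem exists_deepest_posD_extension {π : List ℕ} (hπ : π ∈ PosD R t) :
    ∃ π₁ ∈ PosD R t, π <+: π₁ ∧ ∀ τ ∈ PosD R t, ¬ PosGT τ π₁ := by
  obtain ⟨π₁, ⟨hπ₁, hpre⟩, hmin⟩ := (measure fun τ : List ℕ => t.size - τ.length).wf.has_min
    {τ | τ ∈ PosD R t ∧ π <+: τ} ⟨π, hπ, List.prefix_refl π⟩
  refine ⟨π₁, hπ₁, hpre, fun τ hτ hgt => hmin τ ⟨hτ, hpre.trans (posGT_iff_prefix_ne.1 hgt).1⟩ ?_⟩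
  obtain ⟨u, hu, -⟩ := hτ
  have := Term.length_lt_size_of_subtermAt hu
  have := hgt.length_lt
  show t.size - τ.length < t.size - π₁.length
  omega

theorem exists_msdc_cons_of_deepest {π₁ : List ℕ} (hπ₁ : π₁ ∈ PosD R t)
    (hdeep : ∀ τ ∈ PosD R t, ¬ PosGT τ π₁) : ∃ rest, MSDC R t (π₁ :: rest) := by
  classical
  set rest := (π₁.inits.filter fun π => π ∈ PosD R t ∧ PosGT π₁ π).reverse
  have hrest : ∀ π, π ∈ rest ↔ π ∈ PosD R t ∧ PosGT π₁ π := by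
    intro π
    simp only [rest, List.mem_reverse, List.mem_filter, List.mem_inits, decide_eq_true_eq]
    exact ⟨And.right, fun h => ⟨(posGT_iff_prefix_ne.1 h.2).1, h⟩⟩
  refine ⟨rest, ⟨?_, ?_⟩, Or.inr ⟨π₁, rest, rfl, fun π hπ => ⟨hdeep π hπ, fun h => ?_⟩⟩⟩
  · rintro π (_ | ⟨_, hπ⟩)
    exacts [hπ₁, ((hrest π).1 hπ).1]
  · refine List.Pairwise.isChain (List.pairwise_cons.2 ⟨fun π hπ => ((hrest π).1 hπ).2, ?_⟩)
    exact List.pairwise_reverse.2 ((pairwise_inits_posGT π₁).filter _)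
  · exact (hrest π).2 ⟨hπ, h⟩

theorem MSDC.mem_of_prefix_head {π₁ π : List ℕ} {rest : List (List ℕ)}
    (hc : MSDC R t (π₁ :: rest)) (hπ : π ∈ PosD R t) (hpre : π <+: π₁) :
    π ∈ π₁ :: rest := by
  obtain ⟨-, ⟨hnil, -⟩ | ⟨_, _, hcons, hmax⟩⟩ := hc
  · exact absurd hnil (List.cons_ne_nil _ _)
  obtain ⟨rfl, rfl⟩ := List.cons.inj hcons
  by_cases hne : π = π₁
  · exact hne ▸ List.mem_cons_self
  · exact List.mem_cons_of_mem _ ((hmax π hπ).2 (posGT_iff_prefix_ne.2 ⟨hpre, hne⟩))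

theorem mem_of_unique_msdc {c : List (List ℕ)} (huniq : ∀ c', MSDC R t c' → c' = c)
    {π : List ℕ} (hπ : π ∈ PosD R t) : π ∈ c := by
  obtain ⟨π₁, hπ₁, hpre, hdeep⟩ := exists_deepest_posD_extension hπ
  obtain ⟨rest, hrest⟩ := exists_msdc_cons_of_deepest hπ₁ hdeep
  exact huniq _ hrest ▸ hrest.mem_of_prefix_head hπ hpre

theorem msdc_iff_eq_of_unique {r : List ℕ → List ℕ → Prop} [Std.Asymm r]
    (hOne : ∃! c, MSDC R t c) (hext : ∀ π τ, PosGT π τ → r π τ) {ps : List (List ℕ)}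
    (hmem : ∀ π, π ∈ ps ↔ π ∈ PosD R t) (hps : ps.Pairwise r) (c : List (List ℕ)) :
    MSDC R t c ↔ c = ps := by
  obtain ⟨c₀, hc₀, huniq⟩ := hOne
  have hc₀ps : c₀ = ps := by
    refine List.Pairwise.eq_of_mem_iff ?_ hps fun π => ?_
    · exact (hc₀.1.2.pairwise).imp (hext _ _)
    · rw [hmem π]
      exact ⟨hc₀.1.1 π, mem_of_unique_msdc huniq⟩
  subst hc₀ps
  exact ⟨huniq c, fun h => h ▸ hc₀⟩

end MSDC

theorem dtparRule_eq_singleton_of_msdc_iff {R : Set (Rule σ V)} {ρ : Rule σ V} {ps : List (List ℕ)}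
    (hps : ∀ c, MSDC R ρ.rhs c ↔ c = ps) {us : List (Term σ V)}
    (hus : List.Forall₂ (fun π u => ρ.rhs.subtermAt π = some u) ps us) :
    DTparRule R ρ = {mkDT R ρ us} := by
  ext d
  simp only [DTparRule, hps, Set.mem_ofPred_eq, Set.mem_singleton_iff, exists_and_left,
    exists_eq_left]
  constructor
  · rintro ⟨us', hus', rfl⟩
    rw [List.right_unique_forall₂' (fun _ _ _ h₁ h₂ => Option.some_injective _ (h₁.symm.trans h₂))
      hus' hus]
  · rintro rfl
    exact ⟨us, hus, rfl⟩

theorem dtparRule_eq_singleton_of_unique_msdc {R : Set (Rule σ V)} {ρ : Rule σ V}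
    (hOne : ∃! c, MSDC R ρ.rhs c) {gt' : List ℕ → List ℕ → Prop} (hgt' : TotalExtOfPrefix gt')
    {ps : List (List ℕ)} (hmem : ∀ π, π ∈ ps ↔ π ∈ PosD R ρ.rhs) (hchain : ps.IsChain gt')
    {us : List (Term σ V)} (hus : List.Forall₂ (fun π u => ρ.rhs.subtermAt π = some u) ps us) :
    DTparRule R ρ = {mkDT R ρ us} := by
  obtain ⟨hext, htrans, hasymm, -⟩ := hgt'
  have : IsTrans _ gt' := ⟨htrans⟩
  have : Std.Asymm gt' := ⟨hasymm⟩
  exact dtparRule_eq_singleton_of_msdc_iff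
    (msdc_iff_eq_of_unique hOne hext hmem hchain.pairwise) hus

/-- If `|MSDC(r)| = 1` for every rule `ℓ → r ∈ R`, then
`DTpar(ℓ → r) = {DT(ℓ → r)}` for every rule (where `DT(ℓ → r)` is built from
any enumeration of `PosD(r)` that is decreasing wrt any strict total order on
positions extending the strict prefix order); consequently `DTpar(R) = DT(R)`. -/
theorem dtpar_eq_dt_of_unique_msdc
    {σ V : Type} [Finite σ] (R : Set (Rule σ V)) (hR : IsWfTRS R)
    (hOne : ∀ ρ ∈ R, ∃! c : List (List ℕ), MSDC R ρ.rhs c) :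
    (∀ ρ ∈ R, ∀ gt' : List ℕ → List ℕ → Prop, TotalExtOfPrefix gt' →
      ∀ ps : List (List ℕ), ps.Nodup → (∀ π, π ∈ ps ↔ π ∈ PosD R ρ.rhs) →
        ps.Chain' gt' →
        ∀ us : List (Term σ V),
          List.Forall₂ (fun π u => ρ.rhs.subtermAt π = some u) ps us →
          DTparRule R ρ = {mkDT R ρ us}) ∧
    (∀ dt : Rule σ V → Rule (SharpSym σ) V,
      (∀ ρ ∈ R, ∃ (gt' : List ℕ → List ℕ → Prop) (ps : List (List ℕ))
          (us : List (Term σ V)),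
        TotalExtOfPrefix gt' ∧ ps.Nodup ∧ (∀ π, π ∈ ps ↔ π ∈ PosD R ρ.rhs) ∧
        ps.Chain' gt' ∧
        List.Forall₂ (fun π u => ρ.rhs.subtermAt π = some u) ps us ∧
        dt ρ = mkDT R ρ us) →
      DTparSet R = ⋃ ρ ∈ R, {dt ρ}) := by
  refine ⟨fun ρ hρ gt' hgt' ps _ hmem hchain us hus =>
    dtparRule_eq_singleton_of_unique_msdc (hOne ρ hρ) hgt' hmem hchain hus,
    fun dt hdt => Set.iUnion₂_congr fun ρ hρ => ?_⟩
  obtain ⟨gt', ps, us, hgt', -, hmem, hchain, hus, hdtρ⟩ := hdt ρ hρ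
  rw [hdtρ]
  exact dtparRule_eq_singleton_of_unique_msdc (hOne ρ hρ) hgt' hmem hchain hus

end ParallelComplexity
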